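/- arXiv:2010.02483 — 4 statements merged into one kernel-verified Lean document; each statement's English description precedes it below -/
import Mathlib

section
/- For a polynomial action (T_h)_{h≥0}, the family T_h^{(n)} := Π_n T_h|_{M_n} is a semigroup of linear operators on M_n, i.e. T_0^{(n)} = I and T_h^{(n)} T_k^{(n)} = T_{h+k}^{(n)} for all h, k ≥ 0. -/
/-! Expanding a vector `g` of degree at most `n` in the graded pieces, `g = ∑_{m ≤ n} Π_m g`,
a degree-nonincreasing operator `A` sends the piece `Π_m g` to degree at most `m`, which `Π_n`
kills for `m < n`. Hence `Π_n A Π_n g = Π_n A g`, and the semigroup law of `T` descends to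
`Π_n T_h` on `M_n`. -/

section GradedProjections

variable {R V : Type*} [Semiring R] [AddCommMonoid V] [Module R V]
  {deg : V → ℕ} {Pr : ℕ → Module.End R V}

theorem eq_sum_range_proj_of_deg_le
    (hPrker : ∀ (n : ℕ) (p : V), deg p ≤ n → ∀ l, n < l → Pr l p = 0)
    (hsum : ∀ p, p = ∑ n ∈ Finset.range (deg p + 1), Pr n p)
    {n : ℕ} {p : V} (hp : deg p ≤ n) :
    p = ∑ m ∈ Finset.range (n + 1), Pr m p := by
  refine (hsum p).trans (Finset.sum_subset ?_ fun m _ hm => ?_)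
  · exact Finset.range_subset_range.mpr (by omega)
  · exact hPrker _ p le_rfl m (by simpa using hm)

theorem proj_apply_proj_of_lt
    (hPrrange : ∀ n p, deg (Pr n p) ≤ n)
    (hPrker : ∀ (n : ℕ) (p : V), deg p ≤ n → ∀ l, n < l → Pr l p = 0)
    {A : Module.End R V} (hA : ∀ p, deg (A p) ≤ deg p)
    {m n : ℕ} (hmn : m < n) (p : V) :
    Pr n (A (Pr m p)) = 0 :=
  hPrker m _ ((hA _).trans (hPrrange m p)) n hmn

theorem proj_apply_proj_eq_proj_apply
    (hPrrange : ∀ n p, deg (Pr n p) ≤ n)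
    (hPrker : ∀ (n : ℕ) (p : V), deg p ≤ n → ∀ l, n < l → Pr l p = 0)
    (hsum : ∀ p, p = ∑ n ∈ Finset.range (deg p + 1), Pr n p)
    {A : Module.End R V} (hA : ∀ p, deg (A p) ≤ deg p)
    {n : ℕ} {g : V} (hg : deg g ≤ n) :
    Pr n (A (Pr n g)) = Pr n (A g) := by
  conv_rhs => rw [eq_sum_range_proj_of_deg_le hPrker hsum hg, map_sum, map_sum]
  symm
  refine Finset.sum_eq_single_of_mem n (Finset.self_mem_range_succ n) fun m hm hmn => ?_
  exact proj_apply_proj_of_lt hPrrange hPrker hA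
    (lt_of_le_of_ne (Nat.lt_succ_iff.mp (Finset.mem_range.mp hm)) hmn) g

end GradedProjections

theorem stmt3_general {𝕜 V : Type*} [Field 𝕜] [AddCommGroup V] [Module 𝕜 V]
    (deg : V → ℕ)
    (T : ℝ → Module.End 𝕜 V)
    (Pr : ℕ → Module.End 𝕜 V)
    (hTdeg : ∀ h : ℝ, 0 ≤ h → ∀ p, deg (T h p) ≤ deg p)
    (hT0 : T 0 = 1)
    (hTsem : ∀ h k : ℝ, 0 ≤ h → 0 ≤ k → T h * T k = T (h + k))
    (hPrrange : ∀ n p, deg (Pr n p) ≤ n)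
    (hPrker : ∀ (n : ℕ) (p : V), deg p ≤ n → ∀ l, n < l → Pr l p = 0)
    (hsum : ∀ p, p = ∑ n ∈ Finset.range (deg p + 1), Pr n p) :
    ∀ n : ℕ, ∀ f : V, Pr n f = f →
      Pr n (T 0 f) = f ∧
      ∀ h k : ℝ, 0 ≤ h → 0 ≤ k →
        Pr n (T h (Pr n (T k f))) = Pr n (T (h + k) f) := by
  intro n f hf
  have hdeg : deg f ≤ n := hf ▸ hPrrange n f
  refine ⟨by rw [hT0, Module.End.one_apply, hf], fun h k hh hk => ?_⟩
  rw [proj_apply_proj_eq_proj_apply hPrrange hPrker hsum (hTdeg h hh)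
      ((hTdeg k hk f).trans hdeg), ← Module.End.mul_apply (T h), hTsem h k hh hk]

/-- For a polynomial action `T`, the family
`T^{(n)}_h := Pr n ∘ T h` restricted to `M_n = range (Pr n)` is a semigroup of
linear operators on `M_n`: `T^{(n)}_0 = I` and `T^{(n)}_h T^{(n)}_k = T^{(n)}_{h+k}`. -/
theorem stmt3 {𝕜 V : Type*} [Field 𝕜] [AddCommGroup V] [Module 𝕜 V]
    (deg : V → ℕ)
    (T : ℝ → Module.End 𝕜 V)
    (Pr : ℕ → Module.End 𝕜 V)
    (hTdeg : ∀ h : ℝ, 0 ≤ h → ∀ p, deg (T h p) ≤ deg p)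
    (hT0 : T 0 = 1)
    (hTsem : ∀ h k : ℝ, 0 ≤ h → 0 ≤ k → T h * T k = T (h + k))
    (hPrrange : ∀ n p, deg (Pr n p) ≤ n)
    (hPrker : ∀ (n : ℕ) (p : V), deg p ≤ n → ∀ l, n < l → Pr l p = 0)
    (hPridem : ∀ n, Pr n * Pr n = Pr n)
    (hProrth : ∀ l n : ℕ, l ≠ n → Pr l * Pr n = 0)
    (hsum : ∀ p, p = ∑ n ∈ Finset.range (deg p + 1), Pr n p) :
    ∀ n : ℕ, ∀ f : V, Pr n f = f →
      Pr n (T 0 f) = f ∧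
      ∀ h k : ℝ, 0 ≤ h → 0 ≤ k →
        Pr n (T h (Pr n (T k f))) = Pr n (T (h + k) f) :=
  stmt3_general deg T Pr hTdeg hT0 hTsem hPrrange hPrker hsum
end

section
/- If T is a locally finite polynomial action, then for every p ∈ P the space P_p^0 := ⋃_{l∈ℕ} Span{T_{2^{-l}}^k p : k ∈ ℕ} is a finite-dimensional subspace of P containing p which is T_h-invariant for every dyadic rational h ≥ 0. -/
/-!
Write `W l = Span{T_{2^{-l}}^k p : k}`. Local finiteness bounds `dim W l` uniformly: as soon as
one iterate `T^m p` lies in the span of the earlier ones, that span is `T`-invariant and hence is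
all of `W l`. Since `T_{2^{-l}}` is a power of `T_{2^{-L}}` for `l ≤ L`, the `W l` increase, so their
dimensions stabilise and the union is a single `W L`. A dyadic `T_h` is a power of `T_{2^{-M}}` for
large `M`, so it preserves `W M = W L`.
-/

open Submodule Set Module Module.End

theorem exists_mem_span_of_not_linearIndependent {K V : Type*} [DivisionRing K]
    [AddCommGroup V] [Module K V] {f : ℕ → V} {n : ℕ}
    (h : ¬ LinearIndependent K (fun k : Fin (n + 1) => f k)) :
    ∃ m ≤ n, f m ∈ span K (range fun k : Fin m => f k) := by
  induction n with
  | zero =>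
    rw [linearIndependent_finSucc', not_and_not_right] at h
    exact ⟨0, le_rfl, h linearIndependent_empty_type⟩
  | succ n ih =>
    rw [linearIndependent_finSucc', not_and_not_right] at h
    by_cases hli : LinearIndependent K (fun k : Fin (n + 1) => f k)
    · exact ⟨n + 1, le_rfl, h hli⟩
    · obtain ⟨m, hmn, hm⟩ := ih hli
      exact ⟨m, hmn.trans n.le_succ, hm⟩

namespace Module.End

section Semiring

variable {R M : Type*} [Semiring R] [AddCommMonoid M] [Module R M] (g : Module.End R M) (q : M)

def orbitSpan : Submodule R M :=
  span R (range fun k : ℕ => (g ^ k) q)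

theorem pow_apply_mem_orbitSpan (k : ℕ) : (g ^ k) q ∈ g.orbitSpan q :=
  subset_span ⟨k, rfl⟩

theorem self_mem_orbitSpan : q ∈ g.orbitSpan q := by
  simpa using g.pow_apply_mem_orbitSpan q 0

theorem pow_apply_mem_orbitSpan_of_mem {x : M} (hx : x ∈ g.orbitSpan q) (a : ℕ) :
    (g ^ a) x ∈ g.orbitSpan q := by
  have hmap : (g.orbitSpan q).map (g ^ a) ≤ g.orbitSpan q := by
    rw [orbitSpan, map_span, span_le]
    rintro _ ⟨_, ⟨k, rfl⟩, rfl⟩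
    rw [← mul_apply, ← pow_add]
    exact g.pow_apply_mem_orbitSpan q _
  exact hmap (mem_map_of_mem hx)

theorem orbitSpan_pow_le (m : ℕ) : (g ^ m).orbitSpan q ≤ g.orbitSpan q := by
  rw [orbitSpan, span_le]
  rintro _ ⟨k, rfl⟩
  simp only [SetLike.mem_coe, ← pow_mul]
  exact g.pow_apply_mem_orbitSpan q (m * k)

theorem orbitSpan_le {U : Submodule R M} (hq : q ∈ U) (hU : ∀ x ∈ U, g x ∈ U) :
    g.orbitSpan q ≤ U := by
  rw [orbitSpan, span_le]
  rintro _ ⟨k, rfl⟩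
  induction k with
  | zero => simpa using hq
  | succ k ih => simpa [pow_succ'] using hU _ ih

end Semiring

section DivisionRing

variable {K V : Type*} [DivisionRing K] [AddCommGroup V] [Module K V]
  {g : Module.End K V} {q : V}

theorem orbitSpan_eq_span_of_pow_apply_mem {m : ℕ}
    (hm : (g ^ m) q ∈ span K (range fun k : Fin m => (g ^ (k : ℕ)) q)) :
    g.orbitSpan q = span K (range fun k : Fin m => (g ^ (k : ℕ)) q) := by
  set U := span K (range fun k : Fin m => (g ^ (k : ℕ)) q)
  have hpow_mem : ∀ k ≤ m, (g ^ k) q ∈ U := fun k hk =>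
    hk.lt_or_eq.elim (fun hlt => subset_span ⟨⟨k, hlt⟩, rfl⟩) (· ▸ hm)
  refine le_antisymm (g.orbitSpan_le q (by simpa using hpow_mem 0 m.zero_le) ?_) ?_
  · intro x hx
    have hmap : U.map g ≤ U := by
      rw [map_span, span_le]
      rintro _ ⟨_, ⟨k, rfl⟩, rfl⟩
      rw [← mul_apply, ← pow_succ']
      exact hpow_mem _ k.isLt
    exact hmap (mem_map_of_mem hx)
  · rw [span_le]
    rintro _ ⟨k, rfl⟩
    exact g.pow_apply_mem_orbitSpan q k

theorem exists_orbitSpan_eq_span_fin {n : ℕ}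
    (h : ¬ LinearIndependent K (fun k : Fin (n + 1) => (g ^ (k : ℕ)) q)) :
    ∃ m ≤ n, g.orbitSpan q = span K (range fun k : Fin m => (g ^ (k : ℕ)) q) :=
  let ⟨m, hmn, hm⟩ := exists_mem_span_of_not_linearIndependent (f := fun k => (g ^ k) q) h
  ⟨m, hmn, orbitSpan_eq_span_of_pow_apply_mem hm⟩

theorem finiteDimensional_orbitSpan {n : ℕ}
    (h : ¬ LinearIndependent K (fun k : Fin (n + 1) => (g ^ (k : ℕ)) q)) :
    FiniteDimensional K (g.orbitSpan q) := by
  obtain ⟨m, -, hm⟩ := exists_orbitSpan_eq_span_fin h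
  rw [hm]
  exact FiniteDimensional.span_of_finite K (finite_range _)

theorem finrank_orbitSpan_le {n : ℕ}
    (h : ¬ LinearIndependent K (fun k : Fin (n + 1) => (g ^ (k : ℕ)) q)) :
    finrank K (g.orbitSpan q) ≤ n := by
  obtain ⟨m, hmn, hm⟩ := exists_orbitSpan_eq_span_fin h
  rw [hm]
  have := finrank_range_le_card (R := K) fun k : Fin m => (g ^ (k : ℕ)) q
  rw [Fintype.card_fin] at this
  exact this.trans hmn

end DivisionRing

end Module.End

theorem Submodule.exists_iSup_eq_of_monotone_of_finrank_le {K V : Type*} [DivisionRing K]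
    [AddCommGroup V] [Module K V] {W : ℕ → Submodule K V} [∀ l, FiniteDimensional K (W l)]
    (hW : Monotone W) {n : ℕ} (hn : ∀ l, finrank K (W l) ≤ n) : ∃ L, ⨆ l, W l = W L := by
  have hbdd : BddAbove (range fun l => finrank K (W l)) := ⟨n, by rintro _ ⟨l, rfl⟩; exact hn l⟩
  obtain ⟨L, hL : finrank K (W L) = _⟩ := Nat.sSup_mem (range_nonempty _) hbdd
  refine ⟨L, le_antisymm (iSup_le fun l => ?_) (le_iSup W L)⟩
  rcases le_total l L with hlL | hLl
  · exact hW hlL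
  · refine (eq_of_le_of_finrank_le (hW hLl) ?_).ge
    rw [hL]
    exact le_csSup hbdd ⟨l, rfl⟩

section Semigroup

variable {M : Type*} [Monoid M] {T : ℝ → M} (hT0 : T 0 = 1)
  (hTsem : ∀ h k : ℝ, 0 ≤ h → 0 ≤ k → T h * T k = T (h + k))
include hT0 hTsem

theorem apply_natCast_mul_eq_pow {h : ℝ} (h0 : 0 ≤ h) (a : ℕ) : T (a * h) = T h ^ a := by
  induction a with
  | zero => simpa using hT0
  | succ a ih =>
    rw [Nat.cast_succ, add_one_mul, add_comm, ← hTsem h _ h0 (by positivity), ih, pow_succ']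

theorem apply_dyadic_eq_pow (a : ℕ) {l L : ℕ} (hlL : l ≤ L) :
    T (a * ((2 : ℝ) ^ l)⁻¹) = T ((2 : ℝ) ^ L)⁻¹ ^ (2 ^ (L - l) * a) := by
  have hdyadic : ((2 ^ (L - l) * a : ℕ) : ℝ) * ((2 : ℝ) ^ L)⁻¹ = a * ((2 : ℝ) ^ l)⁻¹ := by
    obtain ⟨d, rfl⟩ := Nat.exists_eq_add_of_le hlL
    rw [Nat.add_sub_cancel_left]
    push_cast
    rw [pow_add]
    field_simp
  rw [← hdyadic, apply_natCast_mul_eq_pow hT0 hTsem (by positivity)]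

end Semigroup

theorem stmt7_general {𝕜 V : Type*} [Field 𝕜] [AddCommGroup V] [Module 𝕜 V]
    (T : ℝ → Module.End 𝕜 V)
    (hT0 : T 0 = 1)
    (hTsem : ∀ h k : ℝ, 0 ≤ h → 0 ≤ k → T h * T k = T (h + k))
    (hlf : ∀ q : V, ∃ n : ℕ, ∀ h : ℝ, 0 < h →
      ¬ LinearIndependent 𝕜 (fun k : Fin (n + 1) => ((T h) ^ (k : ℕ)) q))
    (p : V) :
    ∀ S : Submodule 𝕜 V,
      S = (⨆ l : ℕ, Submodule.span 𝕜
            (Set.range fun k : ℕ => ((T (((2 : ℝ) ^ l)⁻¹)) ^ k) p)) →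
      p ∈ S ∧ FiniteDimensional 𝕜 S ∧
      ∀ h : ℝ, 0 ≤ h → (∃ a l : ℕ, h = (a : ℝ) * ((2 : ℝ) ^ l)⁻¹) →
        ∀ q ∈ S, T h q ∈ S := by
  intro S hS
  let W : ℕ → Submodule 𝕜 V := fun l => (T ((2 : ℝ) ^ l)⁻¹).orbitSpan p
  obtain ⟨n, hn⟩ := hlf p
  have hdep (l : ℕ) := hn ((2 : ℝ) ^ l)⁻¹ (by positivity)
  have hfd (l : ℕ) : FiniteDimensional 𝕜 (W l) := finiteDimensional_orbitSpan (hdep l)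
  have hW : Monotone W := fun l L hlL => by
    have hpow := apply_dyadic_eq_pow hT0 hTsem 1 hlL
    rw [Nat.cast_one, one_mul, mul_one] at hpow
    simpa only [W, hpow] using orbitSpan_pow_le _ p _
  obtain ⟨L, hL⟩ := Submodule.exists_iSup_eq_of_monotone_of_finrank_le hW
    fun l => finrank_orbitSpan_le (hdep l)
  obtain rfl : S = W L := hS.trans hL
  refine ⟨self_mem_orbitSpan _ p, hfd L, ?_⟩
  rintro h - ⟨a, l, rfl⟩ q hq
  rw [apply_dyadic_eq_pow hT0 hTsem a (le_max_left l L)]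
  have hq' : q ∈ W (max l L) := hW (le_max_right l L) hq
  exact hL ▸ le_iSup W (max l L) (pow_apply_mem_orbitSpan_of_mem _ _ hq' _)

/-- For a locally finite polynomial action `T`, the space
`P_p^0 = ⋃_l Span{T_{2^{-l}}^k p : k ∈ ℕ}` is a finite-dimensional subspace
containing `p` which is `T_h`-invariant for every dyadic rational `h ≥ 0`. -/
theorem stmt7 {𝕜 V : Type*} [Field 𝕜] [AddCommGroup V] [Module 𝕜 V]
    (deg : V → ℕ)
    (T : ℝ → Module.End 𝕜 V)
    (hTdeg : ∀ h : ℝ, 0 ≤ h → ∀ p, deg (T h p) ≤ deg p)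
    (hT0 : T 0 = 1)
    (hTsem : ∀ h k : ℝ, 0 ≤ h → 0 ≤ k → T h * T k = T (h + k))
    (hlf : ∀ q : V, ∃ n : ℕ, ∀ h : ℝ, 0 < h →
      ¬ LinearIndependent 𝕜 (fun k : Fin (n + 1) => ((T h) ^ (k : ℕ)) q))
    (p : V) :
    ∀ S : Submodule 𝕜 V,
      S = (⨆ l : ℕ, Submodule.span 𝕜
            (Set.range fun k : ℕ => ((T (((2 : ℝ) ^ l)⁻¹)) ^ k) p)) →
      p ∈ S ∧ FiniteDimensional 𝕜 S ∧
      ∀ h : ℝ, 0 ≤ h → (∃ a l : ℕ, h = (a : ℝ) * ((2 : ℝ) ^ l)⁻¹) →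
        ∀ q ∈ S, T h q ∈ S :=
  stmt7_general T hT0 hTsem hlf p
end

section
/- If T is a strongly reducing polynomial action, then all the eigenvalues λ_n from the reducing characterization are zero, deg(T_h p − p) < deg(p) for all p ∈ P \ P₀, and the exponential series terminates: T_h p = Σ_{k=0}^n (h^k / k!) G^k p for all p ∈ P_n and h ≥ 0. -/
/-!
Comparing top-degree components, `e^{h λ_n} = c` for every `n ≥ 1` and `h ≥ 0`; at `h = 0` this
forces `c = 1`, so each `T_h - 1` strictly lowers degree and is nilpotent on `P_n`. Hence
`T_{ms} p = Σ_{k ≤ n} (m choose k) (T_s - 1)^k p` is a polynomial in `m` of degree `≤ n` for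
each `s > 0`; comparing these polynomials for `s = 1/q` and `s = 1` shows that `t ↦ T_t p` is a
polynomial `Σ_j t^j g_j` at nonnegative rationals, and by right continuity at all `t ≥ 0`.
Differentiating `T_h (T_t p) = T_{t+h} p` at `h = 0⁺` gives `G g_j = (j + 1) g_{j+1}`, so
`G^k p = k! g_k` and the exponential series is exactly this polynomial.
-/

open Filter Polynomial Set Topology

theorem Polynomial.eq_of_forall_eval_natCast_eq {R : Type*} [CommRing R] [IsDomain R]
    [CharZero R] {P Q : R[X]} (h : ∀ m : ℕ, P.eval (m : R) = Q.eval (m : R)) : P = Q :=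
  eq_of_infinite_eval_eq P Q <| (Set.infinite_range_of_injective Nat.cast_injective).mono <| by
    rintro _ ⟨m, rfl⟩
    exact h m

theorem exists_polynomial_eq_of_eval_nat_mul {𝕜 : Type*} [RCLike 𝕜] {f : ℝ → 𝕜} {n : ℕ}
    (hf : ∀ t, 0 ≤ t → ContinuousWithinAt f (Ici t) t)
    (hpoly : ∀ s, 0 < s →
      ∃ Q : 𝕜[X], Q.natDegree ≤ n ∧ ∀ m : ℕ, Q.eval (m : 𝕜) = f (m * s)) :
    ∃ Q : 𝕜[X], Q.natDegree ≤ n ∧ ∀ t, 0 ≤ t → f t = Q.eval (algebraMap ℝ 𝕜 t) := by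
  obtain ⟨Q, hQdeg, hQ⟩ := hpoly 1 one_pos
  refine ⟨Q, hQdeg, ?_⟩
  have hfrac : ∀ m q : ℕ, 0 < q → f (m / q) = Q.eval (algebraMap ℝ 𝕜 (m / q)) := by
    intro m q hq
    obtain ⟨R, -, hR⟩ := hpoly (q : ℝ)⁻¹ (by positivity)
    have hRQ : R.comp (C (q : 𝕜) * X) = Q := eq_of_forall_eval_natCast_eq fun k => by
      rw [eval_comp, hQ k, eval_mul, eval_C, eval_X, ← Nat.cast_mul, hR]
      congr 1
      push_cast
      field_simp
    rw [← hRQ, eval_comp, div_eq_mul_inv, ← hR m]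
    congr 1
    have hq𝕜 : (q : 𝕜) ≠ 0 := Nat.cast_ne_zero.2 hq.ne'
    simp only [eval_mul, eval_natCast, eval_X, map_mul, map_natCast, map_inv₀]
    field_simp
  have hrat : ∀ r : ℚ, 0 < r → f r = Q.eval (algebraMap ℝ 𝕜 r) := by
    intro r hr
    obtain ⟨m, hm⟩ := Int.eq_ofNat_of_zero_le (Rat.num_pos.2 hr).le
    have hr' : (r : ℝ) = (m : ℝ) / (r.den : ℝ) := by rw [Rat.cast_def, hm, Int.cast_natCast]
    rw [hr']
    exact hfrac m r.den r.den_pos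
  intro t ht
  have hne : (𝓝[Ioi t ∩ range ((↑) : ℚ → ℝ)] t).NeBot := by
    refine mem_closure_iff_nhdsWithin_neBot.1 ?_
    have := closure_mono (Rat.denseRange_cast.open_subset_closure_inter (isOpen_Ioi (a := t)))
    rw [closure_closure, closure_Ioi] at this
    exact this (mem_Ici.2 le_rfl)
  have hQc : Continuous fun t : ℝ => Q.eval (algebraMap ℝ 𝕜 t) :=
    Q.continuous.comp (continuous_algebraMap ℝ 𝕜)
  have hft : ContinuousWithinAt f (Ioi t ∩ range ((↑) : ℚ → ℝ)) t :=
    (hf t ht).mono (inter_subset_left.trans Ioi_subset_Ici_self)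
  refine tendsto_nhds_unique_of_eventuallyEq hft.tendsto hQc.continuousWithinAt.tendsto
    (eventually_nhdsWithin_of_forall ?_)
  rintro _ ⟨hx, r, rfl⟩
  exact hrat r (by exact_mod_cast ht.trans_lt hx)

theorem eq_zero_of_forall_exp_mul_eq_one {𝕜 : Type*} [RCLike 𝕜] {l : 𝕜}
    (h : ∀ t : ℝ, 0 ≤ t → NormedSpace.exp (algebraMap ℝ 𝕜 t * l) = 1) : l = 0 := by
  have h' : ∀ t : ℝ, 0 ≤ t → NormedSpace.exp (t • l) = 1 := fun t ht => by
    rw [Algebra.smul_def]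
    exact h t ht
  have hslope := (hasDerivAt_exp_smul_const l (0 : ℝ)).tendsto_slope_zero_right
  simp only [zero_smul, NormedSpace.exp_zero, one_mul, zero_add] at hslope
  refine tendsto_nhds_unique_of_eventuallyEq hslope tendsto_const_nhds ?_
  filter_upwards [self_mem_nhdsWithin] with t ht
  rw [h' t (le_of_lt ht), sub_self, smul_zero]

theorem RCLike.hasDerivAt_algebraMap {𝕜 : Type*} [RCLike 𝕜] (t : ℝ) :
    HasDerivAt (algebraMap ℝ 𝕜) 1 t := by
  simpa [RCLike.algebraMap_eq_ofReal] using (RCLike.ofRealCLM (K := 𝕜)).hasDerivAt (x := t)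

namespace Module.End

variable {R M : Type*} [Semiring R] [AddCommMonoid M] [Module R M]

theorem pow_succ_apply_eq_zero_of_deg_le (deg : M → ℕ) {N : Module.End R M}
    (hN0 : ∀ q, deg q = 0 → N q = 0) (hNlt : ∀ q, deg q ≠ 0 → deg (N q) < deg q) :
    ∀ (n : ℕ) (q : M), deg q ≤ n → (N ^ (n + 1)) q = 0 := by
  intro n
  induction n with
  | zero =>
    intro q hq
    simpa using hN0 q (Nat.le_zero.1 hq)
  | succ n ih =>
    intro q hq
    rw [pow_succ, mul_apply]
    by_cases hq0 : deg q = 0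
    · rw [hN0 q hq0, map_zero]
    · exact ih _ (by have := hNlt q hq0; omega)

theorem add_one_pow_apply_of_pow_apply_eq_zero {N : Module.End R M} {n : ℕ} {p : M}
    (hN : (N ^ (n + 1)) p = 0) (m : ℕ) :
    ((N + 1) ^ m) p = ∑ k ∈ Finset.range (n + 1), m.choose k • (N ^ k) p := by
  calc ((N + 1) ^ m) p = ∑ k ∈ Finset.range (m + 1), m.choose k • (N ^ k) p := by
        simp [(Commute.one_right N).add_pow, LinearMap.sum_apply, natCast_apply]
    _ = ∑ k ∈ Finset.range (m + n + 1), m.choose k • (N ^ k) p := by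
        refine Finset.sum_subset (Finset.range_subset_range.2 (by omega)) fun k _ hk => ?_
        rw [Nat.choose_eq_zero_of_lt (by simpa using hk), zero_smul]
    _ = ∑ k ∈ Finset.range (n + 1), m.choose k • (N ^ k) p := by
        refine (Finset.sum_subset (Finset.range_subset_range.2 (by omega)) fun k _ hk => ?_).symm
        rw [pow_map_zero_of_le (by simpa using hk) hN, smul_zero]

end Module.End

theorem pow_eq_nat_mul_of_semigroup {M : Type*} [Monoid M] {T : ℝ → M} (hT0 : T 0 = 1)
    (hTsem : ∀ h k : ℝ, 0 ≤ h → 0 ≤ k → T h * T k = T (h + k)) {s : ℝ} (hs : 0 ≤ s) :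
    ∀ m : ℕ, T s ^ m = T (m * s)
  | 0 => by simp [hT0]
  | m + 1 => by
    rw [pow_succ, pow_eq_nat_mul_of_semigroup hT0 hTsem hs m, hTsem _ _ (by positivity) hs,
      Nat.cast_succ, add_one_mul]

section Semigroup

variable {𝕜 E : Type*} [RCLike 𝕜] {T : ℝ → Module.End 𝕜 (E → 𝕜)}

theorem exists_polynomial_semigroup_apply (hT0 : T 0 = 1)
    (hTsem : ∀ h k : ℝ, 0 ≤ h → 0 ≤ k → T h * T k = T (h + k))
    (hTcont : ∀ (p : E → 𝕜) (x : E) (h₀ : ℝ), 0 ≤ h₀ →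
      Tendsto (fun h : ℝ => (T h p) x) (𝓝[Ici h₀] h₀) (𝓝 ((T h₀ p) x)))
    {n : ℕ} {p : E → 𝕜} (hnil : ∀ s, 0 ≤ s → ((T s - 1) ^ (n + 1)) p = 0) :
    ∃ Q : E → 𝕜[X], (∀ x, (Q x).natDegree ≤ n) ∧
      ∀ t, 0 ≤ t → ∀ x, T t p x = (Q x).eval (algebraMap ℝ 𝕜 t) := by
  have hpoly : ∀ x s, 0 < s → ∃ Q : 𝕜[X], Q.natDegree ≤ n ∧
      ∀ m : ℕ, Q.eval (m : 𝕜) = T (m * s) p x := by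
    intro x s hs
    refine ⟨∑ k ∈ Finset.range (n + 1),
      C (((T s - 1) ^ k) p x / k.factorial) * descPochhammer 𝕜 k, ?_, fun m => ?_⟩
    · refine natDegree_sum_le_of_forall_le _ _ fun k hk => (natDegree_C_mul_le _ _).trans ?_
      rw [descPochhammer_natDegree]
      exact Finset.mem_range_succ_iff.1 hk
    · have hbinom := Module.End.add_one_pow_apply_of_pow_apply_eq_zero (hnil s hs.le) m
      rw [sub_add_cancel, pow_eq_nat_mul_of_semigroup hT0 hTsem hs.le] at hbinom
      simp only [hbinom, eval_finsetSum, eval_mul, eval_C, descPochhammer_eval_eq_descFactorial,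
        Nat.descFactorial_eq_factorial_mul_choose, Finset.sum_apply, Nat.cast_mul]
      refine Finset.sum_congr rfl fun k _ => ?_
      have hfac : (k.factorial : 𝕜) ≠ 0 := Nat.cast_ne_zero.2 k.factorial_ne_zero
      rw [Pi.smul_apply, nsmul_eq_mul]
      field_simp
  choose Q hQdeg hQ using fun x =>
    exists_polynomial_eq_of_eval_nat_mul (hTcont p x) (hpoly x)
  exact ⟨Q, hQdeg, fun t ht x => hQ x t ht⟩

theorem generator_apply_polynomial_coeff
    (hTsem : ∀ h k : ℝ, 0 ≤ h → 0 ≤ k → T h * T k = T (h + k))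
    {G : Module.End 𝕜 (E → 𝕜)} (hG : ∀ (p : E → 𝕜) (x : E),
      Tendsto (fun h : ℝ => h⁻¹ • ((T h p) x - p x)) (𝓝[>] 0) (𝓝 ((G p) x)))
    {n : ℕ} {p : E → 𝕜} {Q : E → 𝕜[X]} (hQdeg : ∀ x, (Q x).natDegree ≤ n)
    (hQ : ∀ t, 0 ≤ t → ∀ x, T t p x = (Q x).eval (algebraMap ℝ 𝕜 t))
    {j : ℕ} (hj : j ≤ n) :
    G (fun x => (Q x).coeff j) = ((j + 1 : ℕ) : 𝕜) • fun x => (Q x).coeff (j + 1) := by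
  set g : ℕ → E → 𝕜 := fun i x => (Q x).coeff i
  have hsum : ∀ t, 0 ≤ t →
      T t p = ∑ i ∈ Finset.range (n + 1), algebraMap ℝ 𝕜 t ^ i • g i := by
    intro t ht
    funext x
    rw [hQ t ht x, eval_eq_sum_range' (Nat.lt_succ_of_le (hQdeg x)), Finset.sum_apply]
    exact Finset.sum_congr rfl fun i _ => mul_comm _ _
  have hderiv : ∀ t, 0 ≤ t → ∀ x,
      G (T t p) x = (Q x).derivative.eval (algebraMap ℝ 𝕜 t) := by
    intro t ht x
    have hd : HasDerivAt (fun u : ℝ => (Q x).eval (algebraMap ℝ 𝕜 u))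
        ((Q x).derivative.eval (algebraMap ℝ 𝕜 t)) t :=
      (((Q x).hasDerivAt _).comp t (RCLike.hasDerivAt_algebraMap t)).congr_deriv (mul_one _)
    refine tendsto_nhds_unique_of_eventuallyEq (hG (T t p) x) hd.tendsto_slope_zero_right ?_
    filter_upwards [self_mem_nhdsWithin] with h (hh : 0 < h)
    rw [← Module.End.mul_apply, hTsem h t hh.le ht, hQ _ (by positivity) x, hQ t ht x, add_comm]
  funext x
  have hpoly : ∑ i ∈ Finset.range (n + 1), C (G (g i) x) * X ^ i = (Q x).derivative :=
    eq_of_forall_eval_natCast_eq fun m => by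
      rw [← map_natCast (algebraMap ℝ 𝕜), ← hderiv m m.cast_nonneg x, hsum _ m.cast_nonneg,
        map_sum, Finset.sum_apply, eval_finsetSum]
      refine Finset.sum_congr rfl fun i _ => ?_
      rw [map_smul, Pi.smul_apply, smul_eq_mul, eval_mul, eval_C, eval_pow, eval_X, mul_comm]
  have hcoeff := congrArg (coeff · j) hpoly
  simp only [finsetSum_coeff, coeff_C_mul_X_pow, Finset.sum_ite_eq, Finset.mem_range,
    Nat.lt_succ_of_le hj, if_true, coeff_derivative] at hcoeff
  rw [hcoeff, Pi.smul_apply, smul_eq_mul, Nat.cast_succ, mul_comm]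

theorem semigroup_apply_eq_sum_generator_pow (hT0 : T 0 = 1)
    (hTsem : ∀ h k : ℝ, 0 ≤ h → 0 ≤ k → T h * T k = T (h + k))
    (hTcont : ∀ (p : E → 𝕜) (x : E) (h₀ : ℝ), 0 ≤ h₀ →
      Tendsto (fun h : ℝ => (T h p) x) (𝓝[Ici h₀] h₀) (𝓝 ((T h₀ p) x)))
    {G : Module.End 𝕜 (E → 𝕜)}
    (hG : ∀ (p : E → 𝕜) (x : E),
      Tendsto (fun h : ℝ => h⁻¹ • ((T h p) x - p x)) (𝓝[>] 0) (𝓝 ((G p) x)))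
    {n : ℕ} {p : E → 𝕜} (hnil : ∀ s, 0 ≤ s → ((T s - 1) ^ (n + 1)) p = 0)
    {h : ℝ} (hh : 0 ≤ h) :
    T h p = ∑ k ∈ Finset.range (n + 1),
      (algebraMap ℝ 𝕜 h ^ k / (k.factorial : 𝕜)) • (G ^ k) p := by
  obtain ⟨Q, hQdeg, hQ⟩ := exists_polynomial_semigroup_apply hT0 hTsem hTcont hnil
  have hG_pow : ∀ k ≤ n, (G ^ k) p = (k.factorial : 𝕜) • fun x => (Q x).coeff k := by
    intro k hk
    induction k with
    | zero =>
      funext x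
      have hp := hQ 0 le_rfl x
      rw [hT0, map_zero, Module.End.one_apply] at hp
      simp [coeff_zero_eq_eval_zero, hp]
    | succ k ih =>
      rw [pow_succ', Module.End.mul_apply, ih (by omega), map_smul,
        generator_apply_polynomial_coeff hTsem hG hQdeg hQ (by omega), smul_smul,
        Nat.factorial_succ, Nat.cast_mul, mul_comm]
  funext x
  rw [hQ h hh x, eval_eq_sum_range' (Nat.lt_succ_of_le (hQdeg x)), Finset.sum_apply]
  refine Finset.sum_congr rfl fun k hk => ?_
  have hfac : (k.factorial : 𝕜) ≠ 0 := Nat.cast_ne_zero.2 k.factorial_ne_zero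
  rw [Pi.smul_apply, hG_pow k (Finset.mem_range_succ_iff.1 hk), Pi.smul_apply, smul_eq_mul,
    smul_eq_mul]
  field_simp

end Semigroup

section Graded

variable {R M : Type*} [Semiring R] [AddCommMonoid M] [Module R M] {deg : M → ℕ}
  {Pr : ℕ → Module.End R M}

theorem deg_sum_le (hadd : ∀ p q : M, deg (p + q) ≤ max (deg p) (deg q)) (hzero : deg 0 = 0)
    {ι : Type*} (s : Finset ι) (q : ι → M) {b : ℕ} (hq : ∀ i ∈ s, deg (q i) ≤ b) :
    deg (∑ i ∈ s, q i) ≤ b :=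
  Finset.sum_induction q (fun r => deg r ≤ b)
    (fun r r' hr hr' => (hadd r r').trans (max_le hr hr')) (hzero ▸ Nat.zero_le b) hq

theorem deg_eq_of_proj_apply_eq_self (hPrrange : ∀ n p, deg (Pr n p) ≤ n)
    (hPrker : ∀ (n : ℕ) (p : M), deg p ≤ n → ∀ l, n < l → Pr l p = 0) {n : ℕ} {f : M}
    (hf : Pr n f = f) (hf0 : f ≠ 0) : deg f = n := by
  have hle : deg f ≤ n := hf ▸ hPrrange n f
  by_contra hne
  exact hf0 (hf ▸ hPrker (deg f) f le_rfl n (by omega))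

theorem proj_deg_apply_ne_zero (hadd : ∀ p q : M, deg (p + q) ≤ max (deg p) (deg q))
    (hPrrange : ∀ n p, deg (Pr n p) ≤ n)
    (hsum : ∀ p : M, p = ∑ n ∈ Finset.range (deg p + 1), Pr n p) {p : M} (hp : deg p ≠ 0) :
    Pr (deg p) p ≠ 0 := by
  intro h0
  have hp_low : p = ∑ k ∈ Finset.range (deg p), Pr k p := by
    conv_lhs => rw [hsum p]
    rw [Finset.sum_range_succ, h0, add_zero]
  have hzero : deg 0 = 0 := by simpa using hPrrange 0 0
  have := deg_sum_le hadd hzero (Finset.range (deg p)) (fun k => Pr k p) (b := deg p - 1)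
    fun k hk => (hPrrange k p).trans (by simp at hk; omega)
  rw [← hp_low] at this
  omega

end Graded

theorem exp_mul_eigenvalue_eq_of_strongly_reducing {𝕜 M : Type*} [RCLike 𝕜]
    [AddCommGroup M] [Module 𝕜 M] {deg : M → ℕ} {T : ℝ → Module.End 𝕜 M}
    {Pr : ℕ → Module.End 𝕜 M} {lam : ℕ → 𝕜} {c : 𝕜} (hPrrange : ∀ n p, deg (Pr n p) ≤ n)
    (hPrker : ∀ (n : ℕ) (p : M), deg p ≤ n → ∀ l, n < l → Pr l p = 0)
    (hc : ∀ (p : M) (h : ℝ), 0 ≤ h → deg (T h p - c • p) < max 1 (deg p))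
    (hlam : ∀ (n : ℕ) (f : M), Pr n f = f → ∀ h : ℝ, 0 ≤ h →
      Pr n (T h f) = NormedSpace.exp (algebraMap ℝ 𝕜 h * lam n) • f)
    {n : ℕ} {f : M} (hf : Pr n f = f) (hf0 : f ≠ 0) (hn : n ≠ 0) {h : ℝ} (hh : 0 ≤ h) :
    NormedSpace.exp (algebraMap ℝ 𝕜 h * lam n) = c := by
  have hdeg := deg_eq_of_proj_apply_eq_self hPrrange hPrker hf hf0
  have hlow : deg (T h f - c • f) ≤ n - 1 := by
    have := hc f h hh
    rw [hdeg] at this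
    omega
  have hker := hPrker _ _ hlow n (by omega)
  rw [map_sub, map_smul, hf, hlam n f hf h hh, sub_eq_zero] at hker
  exact smul_left_injective 𝕜 hf0 hker

theorem stmt13_general {𝕜 E : Type*} [RCLike 𝕜]
    (deg : (E → 𝕜) → ℕ)
    (T : ℝ → Module.End 𝕜 (E → 𝕜))
    (Pr : ℕ → Module.End 𝕜 (E → 𝕜))
    (G : Module.End 𝕜 (E → 𝕜))
    (lam : ℕ → 𝕜)
    (hadd : ∀ p q : E → 𝕜, deg (p + q) ≤ max (deg p) (deg q))
    (hT0 : T 0 = 1)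
    (hTsem : ∀ h k : ℝ, 0 ≤ h → 0 ≤ k → T h * T k = T (h + k))
    (hTcont : ∀ (p : E → 𝕜) (x : E) (h₀ : ℝ), 0 ≤ h₀ →
      Tendsto (fun h : ℝ => (T h p) x) (nhdsWithin h₀ (Set.Ici h₀))
        (nhds ((T h₀ p) x)))
    (hconst : ∀ h : ℝ, 0 ≤ h → ∀ p : E → 𝕜, deg p = 0 → T h p = p)
    (hstrong : ∃ c : 𝕜, ∀ (p : E → 𝕜) (h : ℝ), 0 ≤ h →
      deg (T h p - c • p) < max 1 (deg p))
    (hPrrange : ∀ n p, deg (Pr n p) ≤ n)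
    (hPrker : ∀ (n : ℕ) (p : E → 𝕜), deg p ≤ n → ∀ l, n < l → Pr l p = 0)
    (hPridem : ∀ n, Pr n * Pr n = Pr n)
    (hsum : ∀ p : E → 𝕜, p = ∑ n ∈ Finset.range (deg p + 1), Pr n p)
    (hG : ∀ (p : E → 𝕜) (x : E),
      Tendsto (fun h : ℝ => h⁻¹ • ((T h p) x - p x))
        (nhdsWithin 0 (Set.Ioi 0)) (nhds ((G p) x)))
    (hlam : ∀ (n : ℕ) (f : E → 𝕜), Pr n f = f → ∀ h : ℝ, 0 ≤ h →
      Pr n (T h f) = NormedSpace.exp (algebraMap ℝ 𝕜 h * lam n) • f) :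
    (∀ n : ℕ, (∃ f : E → 𝕜, Pr n f = f ∧ f ≠ 0) → lam n = 0) ∧
    (∀ p : E → 𝕜, deg p ≠ 0 → ∀ h : ℝ, 0 ≤ h → deg (T h p - p) < deg p) ∧
    (∀ (n : ℕ) (p : E → 𝕜), deg p ≤ n → ∀ h : ℝ, 0 ≤ h →
      T h p = ∑ k ∈ Finset.range (n + 1),
        ((algebraMap ℝ 𝕜 h) ^ k / (Nat.factorial k : 𝕜)) • (G ^ k) p) := by
  obtain ⟨c, hc⟩ := hstrong
  have hc_eq_one : ∀ n f, Pr n f = f → f ≠ 0 → n ≠ 0 → c = 1 := fun n f hf hf0 hn => by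
    simpa using
      (exp_mul_eigenvalue_eq_of_strongly_reducing hPrrange hPrker hc hlam hf hf0 hn le_rfl).symm
  have hlower : ∀ p, deg p ≠ 0 → ∀ h : ℝ, 0 ≤ h → deg (T h p - p) < deg p := by
    intro p hp h hh
    have hproj : Pr (deg p) (Pr (deg p) p) = Pr (deg p) p := by
      rw [← Module.End.mul_apply, hPridem]
    have := hc p h hh
    rwa [hc_eq_one _ _ hproj (proj_deg_apply_ne_zero hadd hPrrange hsum hp) hp, one_smul,
      max_eq_right (Nat.one_le_iff_ne_zero.2 hp)] at this
  refine ⟨?_, hlower, fun n p hp h hh => ?_⟩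
  · rintro n ⟨f, hf, hf0⟩
    refine eq_zero_of_forall_exp_mul_eq_one fun h hh => ?_
    rcases eq_or_ne n 0 with rfl | hn
    · have hfix := hlam 0 f hf h hh
      rw [hconst h hh f (deg_eq_of_proj_apply_eq_self hPrrange hPrker hf hf0), hf] at hfix
      exact smul_left_injective 𝕜 hf0 (hfix.symm.trans (one_smul 𝕜 f).symm)
    · rw [exp_mul_eigenvalue_eq_of_strongly_reducing hPrrange hPrker hc hlam hf hf0 hn hh,
        hc_eq_one n f hf hf0 hn]
  · refine semigroup_apply_eq_sum_generator_pow hT0 hTsem hTcont hG (fun s hs => ?_) hh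
    refine Module.End.pow_succ_apply_eq_zero_of_deg_le deg (fun q hq => ?_) (fun q hq => ?_) n p hp
    · rw [LinearMap.sub_apply, hconst s hs q hq, Module.End.one_apply, sub_self]
    · simpa using hlower q hq s hs

/-- For a strongly reducing polynomial action `T` with generator
`G`: all diagonal eigenvalues `λ_n` (from the reducing characterisation) are
zero, `deg (T_h p - p) < deg p` for nonconstant `p`, and the exponential series
terminates: `T_h p = Σ_{k ≤ n} (h^k/k!) G^k p` for `p ∈ P_n`, `h ≥ 0`. -/
theorem stmt13 {𝕜 E : Type*} [RCLike 𝕜]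
    (deg : (E → 𝕜) → ℕ)
    (T : ℝ → Module.End 𝕜 (E → 𝕜))
    (Pr : ℕ → Module.End 𝕜 (E → 𝕜))
    (G : Module.End 𝕜 (E → 𝕜))
    (lam : ℕ → 𝕜)
    (hadd : ∀ p q : E → 𝕜, deg (p + q) ≤ max (deg p) (deg q))
    (hsmul : ∀ (c : 𝕜) (p : E → 𝕜), c ≠ 0 → deg (c • p) = deg p)
    (hTdeg : ∀ h : ℝ, 0 ≤ h → ∀ p, deg (T h p) ≤ deg p)
    (hT0 : T 0 = 1)
    (hTsem : ∀ h k : ℝ, 0 ≤ h → 0 ≤ k → T h * T k = T (h + k))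
    (hTcont : ∀ (p : E → 𝕜) (x : E) (h₀ : ℝ), 0 ≤ h₀ →
      Tendsto (fun h : ℝ => (T h p) x) (nhdsWithin h₀ (Set.Ici h₀))
        (nhds ((T h₀ p) x)))
    (hconst : ∀ h : ℝ, 0 ≤ h → ∀ p : E → 𝕜, deg p = 0 → T h p = p)
    (hstrong : ∃ c : 𝕜, ∀ (p : E → 𝕜) (h : ℝ), 0 ≤ h →
      deg (T h p - c • p) < max 1 (deg p))
    (hPrrange : ∀ n p, deg (Pr n p) ≤ n)
    (hPrker : ∀ (n : ℕ) (p : E → 𝕜), deg p ≤ n → ∀ l, n < l → Pr l p = 0)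
    (hPridem : ∀ n, Pr n * Pr n = Pr n)
    (hProrth : ∀ l n : ℕ, l ≠ n → Pr l * Pr n = 0)
    (hsum : ∀ p : E → 𝕜, p = ∑ n ∈ Finset.range (deg p + 1), Pr n p)
    (hG : ∀ (p : E → 𝕜) (x : E),
      Tendsto (fun h : ℝ => h⁻¹ • ((T h p) x - p x))
        (nhdsWithin 0 (Set.Ioi 0)) (nhds ((G p) x)))
    (hlam : ∀ (n : ℕ) (f : E → 𝕜), Pr n f = f → ∀ h : ℝ, 0 ≤ h →
      Pr n (T h f) = NormedSpace.exp (algebraMap ℝ 𝕜 h * lam n) • f) :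
    (∀ n : ℕ, (∃ f : E → 𝕜, Pr n f = f ∧ f ≠ 0) → lam n = 0) ∧
    (∀ p : E → 𝕜, deg p ≠ 0 → ∀ h : ℝ, 0 ≤ h → deg (T h p - p) < deg p) ∧
    (∀ (n : ℕ) (p : E → 𝕜), deg p ≤ n → ∀ h : ℝ, 0 ≤ h →
      T h p = ∑ k ∈ Finset.range (n + 1),
        ((algebraMap ℝ 𝕜 h) ^ k / (Nat.factorial k : 𝕜)) • (G ^ k) p) :=
  stmt13_general deg T Pr G lam hadd hT0 hTsem hTcont hconst hstrong hPrrange hPrker hPridem hsum hG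
    hlam
end

section
/- Suppose a strongly continuous semigroup T̄ on the Banach space P̄₁ = P₀ ⊕ L̄ has upper-triangular form with blocks (I, T̄_h^{(0)}; 0, T̄_h^{(1)}) (i.e., T̄_h fixes constants and maps P̄₁ into itself respecting the grading). Then the domain D̄ of the generator Ḡ decomposes as D̄ = P₀ ⊕ (D̄ ∩ L̄), one has D̄ ∩ L̄ ⊆ dom(Ḡ^{(1)}) where Ḡ^{(1)} is the generator of the semigroup T̄^{(1)} on L̄, and for f = c + ℓ with c ∈ P₀ and ℓ ∈ D̄ ∩ L̄ one has Ḡ f = Ḡ^{(0)} ℓ + Ḡ^{(1)} ℓ. -/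
/-!
Since `T h` fixes `P₀`, the difference quotients of `c + ℓ` and of `ℓ` coincide for `h > 0`, so
only the `L̄`-part of `f` matters for differentiability. The blocks `Ḡ^{(0)} ℓ` and `Ḡ^{(1)} ℓ` are
obtained by pushing the limit of the difference quotient through the continuous projections.
-/

open Filter Topology

theorem map_add_sub_add_of_map_eq_self {E F : Type*} [AddCommGroup E] [FunLike F E E]
    [AddMonoidHomClass F E E] (T : F) {c : E} (hc : T c = c) (x : E) :
    T (c + x) - (c + x) = T x - x := by
  rw [map_add, hc]
  abel

theorem Filter.Tendsto.smul_sub_map {𝕜 E F : Type*} [RCLike 𝕜] [NormedAddCommGroup E]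
    [NormedSpace 𝕜 E] [NormedSpace ℝ E] [IsScalarTower ℝ 𝕜 E] [NormedAddCommGroup F]
    [NormedSpace 𝕜 F] [NormedSpace ℝ F] [IsScalarTower ℝ 𝕜 F] {l : Filter ℝ} {u : ℝ → E}
    {x g : E} (hu : Tendsto (fun h => h⁻¹ • (u h - x)) l (𝓝 g)) (P : E →L[𝕜] F) :
    Tendsto (fun h => h⁻¹ • (P (u h) - P x)) l (𝓝 (P g)) :=
  ((P.continuous.tendsto g).comp hu).congr fun h => by
    simp only [Function.comp, P.map_smul_of_tower, map_sub]

theorem tendsto_smul_sub_add_iff_of_map_eq_self {E G : Type*} [AddCommGroup E] [Module ℝ E]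
    [TopologicalSpace E] [FunLike G E E] [AddMonoidHomClass G E E] (T : ℝ → G) {c : E}
    (hc : ∀ h, 0 < h → T h c = c) (x g : E) :
    Tendsto (fun h => h⁻¹ • (T h (c + x) - (c + x))) (𝓝[>] 0) (𝓝 g) ↔
      Tendsto (fun h => h⁻¹ • (T h x - x)) (𝓝[>] 0) (𝓝 g) := by
  refine tendsto_congr' ?_
  filter_upwards [self_mem_nhdsWithin] with h hh
  rw [map_add_sub_add_of_map_eq_self (T h) (hc h hh)]

theorem stmt18_general {𝕜 B : Type*} [RCLike 𝕜] [NormedAddCommGroup B]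
    [NormedSpace 𝕜 B] [NormedSpace ℝ B] [IsScalarTower ℝ 𝕜 B]
    (T : ℝ → B →L[𝕜] B)
    (P0 P1 : B →L[𝕜] B)
    (hsum : ∀ f, P0 f + P1 f = f)
    (h01 : ∀ f, P0 (P1 f) = 0)
    (hconstfix : ∀ h : ℝ, 0 ≤ h → ∀ f : B, T h (P0 f) = P0 f) :
    (∀ f : B,
      (∃ g : B, Tendsto (fun h : ℝ => h⁻¹ • (T h f - f))
          (nhdsWithin 0 (Set.Ioi 0)) (nhds g)) ↔
      (∃ g : B, Tendsto (fun h : ℝ => h⁻¹ • (T h (P1 f) - P1 f))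
          (nhdsWithin 0 (Set.Ioi 0)) (nhds g))) ∧
    (∀ (ℓ g : B), P1 ℓ = ℓ →
      Tendsto (fun h : ℝ => h⁻¹ • (T h ℓ - ℓ))
        (nhdsWithin 0 (Set.Ioi 0)) (nhds g) →
      Tendsto (fun h : ℝ => h⁻¹ • (P1 (T h ℓ) - ℓ))
        (nhdsWithin 0 (Set.Ioi 0)) (nhds (P1 g)) ∧
      Tendsto (fun h : ℝ => h⁻¹ • (P0 (T h ℓ) : B))
        (nhdsWithin 0 (Set.Ioi 0)) (nhds (P0 g))) ∧
    (∀ (c ℓ g : B), P0 c = c → P1 ℓ = ℓ →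
      Tendsto (fun h : ℝ => h⁻¹ • (T h ℓ - ℓ))
        (nhdsWithin 0 (Set.Ioi 0)) (nhds g) →
      Tendsto (fun h : ℝ => h⁻¹ • (T h (c + ℓ) - (c + ℓ)))
        (nhdsWithin 0 (Set.Ioi 0)) (nhds (P0 g + P1 g))) := by
  have hfix (f : B) : ∀ h, 0 < h → T h (P0 f) = P0 f := fun h hh => hconstfix h hh.le f
  refine ⟨fun f => ?_, fun ℓ g hℓ hg => ?_, fun c ℓ g hc hℓ hg => ?_⟩
  · have hquot := tendsto_smul_sub_add_iff_of_map_eq_self T (hfix f) (P1 f)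
    simp only [hsum] at hquot
    exact exists_congr hquot
  · have h0ℓ : P0 ℓ = 0 := by rw [← hℓ, h01]
    constructor
    · simpa only [hℓ] using hg.smul_sub_map P1
    · simpa only [h0ℓ, sub_zero] using hg.smul_sub_map P0
  · rw [hsum g, ← hc, tendsto_smul_sub_add_iff_of_map_eq_self T (hfix c)]
    exact hg

/-- For a strongly continuous semigroup `T̄` on `P̄₁ = P₀ ⊕ L̄`
with upper-triangular block form (it fixes the constants `P₀ = range P0` and
respects the grading), the domain `D̄` of its generator decomposes as
`D̄ = P₀ ⊕ (D̄ ∩ L̄)`, elements of `D̄ ∩ L̄` lie in the domain of the generator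
of `T̄^{(1)}` (together with the existence of `Ḡ^{(0)}`), and for `f = c + ℓ`
one has `Ḡ f = Ḡ^{(0)} ℓ + Ḡ^{(1)} ℓ`. -/
theorem stmt18 {𝕜 B : Type*} [RCLike 𝕜] [NormedAddCommGroup B]
    [NormedSpace 𝕜 B] [NormedSpace ℝ B] [IsScalarTower ℝ 𝕜 B] [CompleteSpace B]
    (T : ℝ → B →L[𝕜] B)
    (P0 P1 : B →L[𝕜] B)
    (hsum : ∀ f, P0 f + P1 f = f)
    (h00 : ∀ f, P0 (P0 f) = P0 f) (h11 : ∀ f, P1 (P1 f) = P1 f)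
    (h01 : ∀ f, P0 (P1 f) = 0) (h10 : ∀ f, P1 (P0 f) = 0)
    (hT0 : T 0 = ContinuousLinearMap.id 𝕜 B)
    (hTsem : ∀ h k : ℝ, 0 ≤ h → 0 ≤ k → (T h).comp (T k) = T (h + k))
    (hTcont : ∀ f : B, Continuous fun h : ℝ => T h f)
    (hconstfix : ∀ h : ℝ, 0 ≤ h → ∀ f : B, T h (P0 f) = P0 f)
    (hlower : ∀ h : ℝ, 0 ≤ h → ∀ f : B, P1 (T h (P0 f)) = 0) :
    (∀ f : B,
      (∃ g : B, Tendsto (fun h : ℝ => h⁻¹ • (T h f - f))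
          (nhdsWithin 0 (Set.Ioi 0)) (nhds g)) ↔
      (∃ g : B, Tendsto (fun h : ℝ => h⁻¹ • (T h (P1 f) - P1 f))
          (nhdsWithin 0 (Set.Ioi 0)) (nhds g))) ∧
    (∀ (ℓ g : B), P1 ℓ = ℓ →
      Tendsto (fun h : ℝ => h⁻¹ • (T h ℓ - ℓ))
        (nhdsWithin 0 (Set.Ioi 0)) (nhds g) →
      Tendsto (fun h : ℝ => h⁻¹ • (P1 (T h ℓ) - ℓ))
        (nhdsWithin 0 (Set.Ioi 0)) (nhds (P1 g)) ∧
      Tendsto (fun h : ℝ => h⁻¹ • (P0 (T h ℓ) : B))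
        (nhdsWithin 0 (Set.Ioi 0)) (nhds (P0 g))) ∧
    (∀ (c ℓ g : B), P0 c = c → P1 ℓ = ℓ →
      Tendsto (fun h : ℝ => h⁻¹ • (T h ℓ - ℓ))
        (nhdsWithin 0 (Set.Ioi 0)) (nhds g) →
      Tendsto (fun h : ℝ => h⁻¹ • (T h (c + ℓ) - (c + ℓ)))
        (nhdsWithin 0 (Set.Ioi 0)) (nhds (P0 g + P1 g))) :=
  stmt18_general T P0 P1 hsum h01 hconstfix
end
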